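/- Let (X, μ) be a measure space, T a countable family of measurable subsets of X with finite positive measure, and suppose for every t > 0 the set {M_{T,α} f > t} is a countable union of pairwise disjoint members S of T each satisfying μ(S)^{α−1} ∫_S |f| dμ > t. If 0 < α < 1 and 1/p − 1/q = α with 1 < p < q < ∞, then for any single such disjoint family T_t, one has Σ_{S ∈ T_t} μ(S) · t^q ≤ (∫_X |f|^p dμ)^{q/p}. -/

import Mathlib

open MeasureTheory ENNReal Function

/-! Hölder's inequality against the constant `1` on `S` gives
`μ(S)^{α-1} ∫_S f ≤ (∫_S f^p)^{1/p} μ(S)^{-1/q}`, because `α - 1 + (1 - 1/p) = -1/q`;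
so a set on which the fractional average exceeds `t` satisfies `μ(S) t^q ≤ (∫_S f^p)^{q/p}`.
Summing over the disjoint family, superadditivity of `x ↦ x^{q/p}` for `q/p ≥ 1` finishes. -/

theorem ENNReal.tsum_rpow_le_rpow_tsum {ι : Type*} (a : ι → ℝ≥0∞) {r : ℝ} (hr : 1 ≤ r) :
    ∑' i, a i ^ r ≤ (∑' i, a i) ^ r := by
  have hsplit : ∀ x : ℝ≥0∞, x ^ r = x * x ^ (r - 1) := fun x => by
    conv_lhs => rw [← add_sub_cancel 1 r, rpow_add_of_nonneg _ _ zero_le_one (sub_nonneg.2 hr)]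
    rw [rpow_one]
  calc ∑' i, a i ^ r = ∑' i, a i * a i ^ (r - 1) := by simp only [hsplit]
    _ ≤ ∑' i, a i * (∑' j, a j) ^ (r - 1) := by
      gcongr with i
      exact ENNReal.le_tsum i
    _ = (∑' i, a i) ^ r := by rw [ENNReal.tsum_mul_right, ← hsplit]

namespace MeasureTheory

variable {X : Type*} [MeasurableSpace X] {μ : Measure X}

theorem tsum_setLIntegral_le_lintegral {ι : Type*} [Countable ι] {s : ι → Set X}
    (hs : ∀ i, MeasurableSet (s i)) (hd : Pairwise (Disjoint on s)) (f : X → ℝ≥0∞) :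
    ∑' i, ∫⁻ x in s i, f x ∂μ ≤ ∫⁻ x, f x ∂μ := by
  rw [← lintegral_iUnion hs hd]
  exact setLIntegral_le_lintegral _ _

theorem lintegral_le_lintegral_rpow_mul_measure_univ {f : X → ℝ≥0∞} (hf : AEMeasurable f μ)
    {p : ℝ} (hp : 1 ≤ p) :
    ∫⁻ x, f x ∂μ ≤ (∫⁻ x, f x ^ p ∂μ) ^ (1 / p) * μ Set.univ ^ (1 - 1 / p) := by
  simpa [eLpNorm'_eq_lintegral_enorm] using
    eLpNorm'_le_eLpNorm'_mul_rpow_measure_univ one_pos hp hf.aestronglyMeasurable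

noncomputable def fractionalAverage (μ : Measure X) (α : ℝ) (f : X → ℝ≥0∞) (S : Set X) :
    ℝ≥0∞ :=
  μ S ^ (α - 1) * ∫⁻ x in S, f x ∂μ

theorem fractionalAverage_le {f : X → ℝ≥0∞} (hf : AEMeasurable f μ) {S : Set X}
    (hS0 : μ S ≠ 0) (hS : μ S ≠ ∞) {α p q : ℝ} (hp : 1 ≤ p) (hpqα : 1 / p - 1 / q = α) :
    fractionalAverage μ α f S ≤ (∫⁻ x in S, f x ^ p ∂μ) ^ (1 / p) * μ S ^ (-(1 / q)) := by
  have holder := lintegral_le_lintegral_rpow_mul_measure_univ (hf.restrict (s := S)) hp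
  rw [Measure.restrict_apply_univ] at holder
  calc fractionalAverage μ α f S
      ≤ μ S ^ (α - 1) * ((∫⁻ x in S, f x ^ p ∂μ) ^ (1 / p) * μ S ^ (1 - 1 / p)) := by
        unfold fractionalAverage; gcongr
    _ = (∫⁻ x in S, f x ^ p ∂μ) ^ (1 / p) * μ S ^ (α - 1 + (1 - 1 / p)) := by
        rw [rpow_add _ _ hS0 hS]; ring
    _ = (∫⁻ x in S, f x ^ p ∂μ) ^ (1 / p) * μ S ^ (-(1 / q)) := by
        congr 2; linarith

theorem measure_mul_rpow_le_of_lt_fractionalAverage {f : X → ℝ≥0∞} (hf : AEMeasurable f μ)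
    {S : Set X} (hS0 : μ S ≠ 0) (hS : μ S ≠ ∞) {α p q : ℝ} (hp : 1 ≤ p) (hq : 0 < q)
    (hpqα : 1 / p - 1 / q = α) {t : ℝ≥0∞} (ht : t < fractionalAverage μ α f S) :
    μ S * t ^ q ≤ (∫⁻ x in S, f x ^ p ∂μ) ^ (q / p) := by
  set A := ∫⁻ x in S, f x ^ p ∂μ
  have htq : t ^ q ≤ A ^ (q / p) * μ S ^ (-1 : ℝ) := calc
    t ^ q ≤ (A ^ (1 / p) * μ S ^ (-(1 / q))) ^ q :=
      rpow_le_rpow (ht.le.trans (fractionalAverage_le hf hS0 hS hp hpqα)) hq.le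
    _ = A ^ (q / p) * μ S ^ (-1 : ℝ) := by
      rw [mul_rpow_of_nonneg _ _ hq.le, ← rpow_mul, ← rpow_mul]
      congr 2 <;> field_simp
  calc μ S * t ^ q ≤ μ S * (A ^ (q / p) * μ S ^ (-1 : ℝ)) := by gcongr
    _ = A ^ (q / p) := by
      rw [mul_left_comm, rpow_neg_one, ENNReal.mul_inv_cancel hS0 hS, mul_one]

end MeasureTheory

theorem fractional_maximal_disjoint_family_bound_general {X : Type*} [MeasurableSpace X]
    (μ : Measure X)
    (T : ℕ → Set X) (hTm : ∀ j, MeasurableSet (T j))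
    (hTpos : ∀ j, 0 < μ (T j)) (hTfin : ∀ j, μ (T j) < ∞)
    (α p q : ℝ)
    (hp : 1 < p) (hpq : p < q) (hpqα : 1 / p - 1 / q = α)
    (f : X → ℝ≥0∞) (hf : Measurable f)
    (t : ℝ≥0∞) (Tt : Set ℕ)
    (hdisj : Tt.Pairwise fun i j => Disjoint (T i) (T j))
    (havg : ∀ j ∈ Tt, t < μ (T j) ^ (α - 1) * ∫⁻ x in T j, f x ∂μ) :
    ∑' j : Tt, μ (T j) * t ^ q ≤ (∫⁻ x, f x ^ p ∂μ) ^ (q / p) := by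
  have hp0 : 0 < p := one_pos.trans hp
  have hqp : 1 ≤ q / p := (one_le_div hp0).2 hpq.le
  calc ∑' j : Tt, μ (T j) * t ^ q
      ≤ ∑' j : Tt, (∫⁻ x in T j, f x ^ p ∂μ) ^ (q / p) :=
        ENNReal.tsum_le_tsum fun j => measure_mul_rpow_le_of_lt_fractionalAverage
          hf.aemeasurable (hTpos j).ne' (hTfin j).ne hp.le (hp0.trans hpq) hpqα (havg j j.2)
    _ ≤ (∑' j : Tt, ∫⁻ x in T j, f x ^ p ∂μ) ^ (q / p) := ENNReal.tsum_rpow_le_rpow_tsum _ hqp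
    _ ≤ (∫⁻ x, f x ^ p ∂μ) ^ (q / p) :=
        rpow_le_rpow (tsum_setLIntegral_le_lintegral (s := fun j : Tt => T j)
          (fun j => hTm j) hdisj.subtype _) (zero_le_one.trans hqp)

/-- The core computation in the weak (p,q) bound for the fractional maximal
operator: for a disjoint subfamily `Tt` of tents on which the fractional
average exceeds `t` and whose union is the superlevel set `{M f > t}`, the
sum `Σ_{S ∈ Tt} μ(S) · t^q` is controlled by `(∫ |f|^p dμ)^{q/p}`. -/
theorem fractional_maximal_disjoint_family_bound {X : Type*} [MeasurableSpace X]
    (μ : Measure X)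
    (T : ℕ → Set X) (hTm : ∀ j, MeasurableSet (T j))
    (hTpos : ∀ j, 0 < μ (T j)) (hTfin : ∀ j, μ (T j) < ∞)
    (α p q : ℝ) (hα0 : 0 < α) (hα1 : α < 1)
    (hp : 1 < p) (hpq : p < q) (hpqα : 1 / p - 1 / q = α)
    (f : X → ℝ≥0∞) (hf : Measurable f)
    (M : X → ℝ≥0∞)
    (hM : ∀ z, M z = ⨆ j, (T j).indicator
      (fun _ => μ (T j) ^ (α - 1) * ∫⁻ x in T j, f x ∂μ) z)
    (t : ℝ≥0∞) (ht : 0 < t) (Tt : Set ℕ)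
    (hunion : {z | t < M z} = ⋃ j ∈ Tt, T j)
    (hdisj : Tt.Pairwise fun i j => Disjoint (T i) (T j))
    (havg : ∀ j ∈ Tt, t < μ (T j) ^ (α - 1) * ∫⁻ x in T j, f x ∂μ) :
    ∑' j : Tt, μ (T j) * t ^ q ≤ (∫⁻ x, f x ^ p ∂μ) ^ (q / p) :=
  fractional_maximal_disjoint_family_bound_general μ T hTm hTpos hTfin α p q hp hpq hpqα f hf t Tt
    hdisj havg
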